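/- For every integer m ≥ 1, every real q > 1, and all real x, y, one has ∑_{k=0}^{m} [m choose k]_q · q^{-(m-1)(m-k)/2} · B_{m-k}(y|q) · H_k(x|q) = ∏_{j=1}^{i} v_{2j-1}(x, -y, q) if m = 2i, and = ∏_{j=0}^{i} v_{2j}(x, -y, q) if m = 2i+1. -/

import Mathlib

/-- `[n]_q = 1 + q + ⋯ + q^{n-1}`. -/
def qInt (q : ℝ) (n : ℕ) : ℝ := ∑ i ∈ Finset.range n, q ^ i

/-- `[n]_q! = [1]_q·[2]_q⋯[n]_q`. -/
def qFact (q : ℝ) (n : ℕ) : ℝ := ∏ i ∈ Finset.range n, qInt q (i + 1)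

/-- The `q`-binomial coefficient `[m choose k]_q = [m]_q!/([k]_q!·[m-k]_q!)`. -/
noncomputable def qBinomF (q : ℝ) (m k : ℕ) : ℝ := qFact q m / (qFact q k * qFact q (m - k))

/-- The `q`-Hermite polynomials `H_n(x|q)`:
`H_0 = 1`, `H_1 = x`, `H_{n+2} = x·H_{n+1} - [n+1]_q·H_n`. -/
noncomputable def Hq (q x : ℝ) : ℕ → ℝ
  | 0 => 1
  | 1 => x
  | n + 2 => x * Hq q x (n + 1) - qInt q (n + 1) * Hq q x n

/-- The polynomials `B_n(y|q)`:
`B_0 = 1`, `B_1 = -y`, `B_{n+2} = -q^{n+1}y·B_{n+1} + q^n·[n+1]_q·B_n`. -/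
noncomputable def Bq (q y : ℝ) : ℕ → ℝ
  | 0 => 1
  | 1 => -y
  | n + 2 => -q ^ (n + 1) * y * Bq q y (n + 1) + q ^ n * qInt q (n + 1) * Bq q y n

/-- `v_n(x,y,q)`: `v_0 = x + y` and for `n ≥ 1`,
`v_n = x² + y² + xy(q^{n/2} + q^{-n/2}) - (q^n + q^{-n} - 2)/(q-1)`. -/
noncomputable def vfun (q x y : ℝ) (n : ℕ) : ℝ :=
  if n = 0 then x + y
  else x ^ 2 + y ^ 2 + x * y * (q ^ ((n : ℝ) / 2) + q ^ (-(n : ℝ) / 2))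
    - (q ^ (n : ℝ) + q ^ (-(n : ℝ)) - 2) / (q - 1)

/-!
Write `y = -(s + t)` with `(q - 1) s t = -1` and put `u = √q`. Then
`B_n(y|q) = q^(n choose 2) R_n(s, t)` with the Rogers–Szegő-type polynomial
`R_n(s, t) = ∑_b [n choose b]_q q^(-b(n-b)) s^(n-b) t^b`, so the left-hand side becomes
`U_m(s, t) = ∑_k [m choose k]_q u^(-(m-k)k) R_(m-k)(s, t) H_k(x|q)`.
Multiplying by `x` through the three-term recurrence of `H_k` gives
`U_(m+1)(s, t) = (x + u^(-m) s + u^m t) U_m(u s, t / u)`, which is also the recursion of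
`P_m(s, t) = ∏_(j<m) (x + u^(m-1-2j) s + u^(-(m-1-2j)) t)`. Hence `U_m = P_m`, and the factors of
`P_m` with exponents `±n` multiply to `v_n(x, s + t, q) = v_n(x, -y, q)`.
-/

open Finset

section

variable {q u s t : ℝ}

lemma qInt_add (q : ℝ) (a b : ℕ) : qInt q (a + b) = qInt q a + q ^ a * qInt q b := by
  simp only [qInt, sum_range_add, pow_add, mul_sum]

lemma qInt_mul_sub_one (q : ℝ) (n : ℕ) : qInt q n * (q - 1) = q ^ n - 1 := geom_sum_mul q n

lemma qInt_zero (q : ℝ) : qInt q 0 = 0 := sum_range_zero _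

lemma qInt_one (q : ℝ) : qInt q 1 = 1 := by simp [qInt]

lemma qInt_succ_pos (hq : 0 < q) (n : ℕ) : 0 < qInt q (n + 1) :=
  sum_pos (fun i _ => pow_pos hq i) nonempty_range_add_one

lemma qFact_zero (q : ℝ) : qFact q 0 = 1 := prod_range_zero _

lemma qFact_one (q : ℝ) : qFact q 1 = 1 := by simp [qFact, qInt]

lemma qFact_succ (q : ℝ) (n : ℕ) : qFact q (n + 1) = qFact q n * qInt q (n + 1) :=
  prod_range_succ _ n

lemma qFact_pos (hq : 0 < q) (n : ℕ) : 0 < qFact q n :=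
  prod_pos fun i _ => qInt_succ_pos hq i

lemma qBinomF_add (q : ℝ) (j k : ℕ) :
    qBinomF q (j + k) k = qFact q (j + k) / (qFact q j * qFact q k) := by
  rw [qBinomF, Nat.add_sub_cancel, mul_comm (qFact q k)]

lemma qBinomF_zero_right (hq : 0 < q) (n : ℕ) : qBinomF q n 0 = 1 := by
  rw [qBinomF, Nat.sub_zero, qFact_zero, one_mul, div_self (qFact_pos hq _).ne']

lemma qBinomF_self (hq : 0 < q) (n : ℕ) : qBinomF q n n = 1 := by
  rw [qBinomF, Nat.sub_self, qFact_zero, mul_one, div_self (qFact_pos hq _).ne']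

lemma qBinomF_pascal (hq : 0 < q) (j k : ℕ) :
    qBinomF q (j + k + 2) (k + 1)
      = qBinomF q (j + k + 1) (k + 1) + q ^ (j + 1) * qBinomF q (j + k + 1) k := by
  have hF := fun n => (qFact_pos hq n).ne'
  have hI := fun n => (qInt_succ_pos hq n).ne'
  have hadd := qInt_add q (j + 1) (k + 1)
  rw [show j + 1 + (k + 1) = j + 1 + k + 1 by omega] at hadd
  rw [show j + k + 2 = (j + 1) + (k + 1) by omega, qBinomF_add,
    show j + k + 1 = j + (k + 1) by omega, qBinomF_add, show j + (k + 1) = (j + 1) + k by omega,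
    qBinomF_add, show j + 1 + (k + 1) = (j + 1 + k) + 1 by omega, qFact_succ q (j + 1 + k),
    qFact_succ q j, qFact_succ q k]
  field_simp [hF, hI]
  linear_combination hadd

lemma qInt_mul_qBinomF (hq : 0 < q) (j k : ℕ) :
    qInt q (j + k + 1) * qBinomF q (j + k) k = qInt q (k + 1) * qBinomF q (j + k + 1) (k + 1) := by
  have hF := fun n => (qFact_pos hq n).ne'
  have hI := fun n => (qInt_succ_pos hq n).ne'
  rw [qBinomF_add, show j + k + 1 = j + (k + 1) by omega, qBinomF_add, ← add_assoc,
    qFact_succ q (j + k), qFact_succ q k]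
  field_simp [hF, hI]

/-- Since `[n choose b]_q q^(-b(n-b)) = [n choose b]_(1/q)`, this is the homogeneous
Rogers–Szegő polynomial of base `1/q`. -/
noncomputable def rogersSzego (q s t : ℝ) (n : ℕ) : ℝ :=
  ∑ b ∈ range (n + 1), qBinomF q n b * s ^ (n - b) * t ^ b / q ^ (b * (n - b))

lemma rogersSzego_zero (s t : ℝ) : rogersSzego q s t 0 = 1 := by
  simp [rogersSzego, qBinomF, qFact]

lemma rogersSzego_one (hq : 0 < q) (s t : ℝ) : rogersSzego q s t 1 = s + t := by
  simp [rogersSzego, sum_range_succ, qBinomF_zero_right hq, qBinomF_self hq]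

lemma rogersSzego_succ (hq : 0 < q) (s t : ℝ) (n : ℕ) :
    rogersSzego q s t (n + 1) = s * rogersSzego q s (t / q) n + t * rogersSzego q s t n := by
  have hpascal : ∀ b ∈ range n,
      qBinomF q (n + 1) (b + 1) * s ^ (n + 1 - (b + 1)) * t ^ (b + 1)
          / q ^ ((b + 1) * (n + 1 - (b + 1)))
        = s * (qBinomF q n (b + 1) * s ^ (n - (b + 1)) * (t / q) ^ (b + 1)
              / q ^ ((b + 1) * (n - (b + 1))))
          + t * (qBinomF q n b * s ^ (n - b) * t ^ b / q ^ (b * (n - b))) := by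
    intro b hb
    obtain ⟨c, rfl⟩ : ∃ c, n = c + b + 1 := ⟨n - b - 1, by grind⟩
    rw [show c + b + 1 + 1 = c + b + 2 by omega, qBinomF_pascal hq,
      show c + b + 2 - (b + 1) = c + 1 by omega, show c + b + 1 - (b + 1) = c by omega,
      show c + b + 1 - b = c + 1 by omega, div_pow]
    field_simp
    ring
  rw [rogersSzego, sum_range_succ, sum_range_succ', sum_congr rfl hpascal, sum_add_distrib,
    ← mul_sum, ← mul_sum, rogersSzego, rogersSzego, sum_range_succ' _ n, sum_range_succ _ n]
  simp [qBinomF_zero_right hq, qBinomF_self hq]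
  ring

lemma rogersSzego_succ_eq_div_add (hq : 0 < q) (s t : ℝ) (n : ℕ) :
    rogersSzego q s t (n + 1)
      = rogersSzego q s (t / q) (n + 1)
        + (q - 1) * qInt q (n + 1) * t * rogersSzego q s t n / q ^ (n + 1) := by
  have hterm : ∀ b ∈ range (n + 1),
      qBinomF q (n + 1) (b + 1) * s ^ (n + 1 - (b + 1)) * t ^ (b + 1)
          / q ^ ((b + 1) * (n + 1 - (b + 1)))
        = qBinomF q (n + 1) (b + 1) * s ^ (n + 1 - (b + 1)) * (t / q) ^ (b + 1)
              / q ^ ((b + 1) * (n + 1 - (b + 1)))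
          + (q - 1) * qInt q (n + 1) * t * (qBinomF q n b * s ^ (n - b) * t ^ b / q ^ (b * (n - b)))
              / q ^ (n + 1) := by
    intro b hb
    obtain ⟨c, rfl⟩ : ∃ c, n = c + b := ⟨n - b, by grind⟩
    rw [show c + b + 1 - (b + 1) = c by omega, Nat.add_sub_cancel, div_pow]
    linear_combination (norm := skip)
      (-(qBinomF q (c + b + 1) (b + 1) * s ^ c * t ^ (b + 1) / q ^ ((b + 1) * c)) / q ^ (b + 1))
          * qInt_mul_sub_one q (b + 1)
        - ((q - 1) * s ^ c * t ^ (b + 1) / q ^ ((b + 1) * c + (b + 1))) * qInt_mul_qBinomF hq c b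
    field_simp
    ring
  rw [rogersSzego, sum_range_succ', sum_congr rfl hterm, sum_add_distrib, rogersSzego,
    sum_range_succ' _ (n + 1), rogersSzego, mul_sum, sum_div]
  simp [qBinomF_zero_right hq]
  ring

lemma rogersSzego_three_term (hq : 0 < q) (s t : ℝ) (n : ℕ) :
    rogersSzego q s t (n + 2) = (s + t) * rogersSzego q s t (n + 1)
      - (q - 1) * qInt q (n + 1) * s * t * rogersSzego q s t n / q ^ (n + 1) := by
  rw [rogersSzego_succ hq]
  linear_combination (-s) * rogersSzego_succ_eq_div_add hq s t n

lemma rogersSzego_add_two_eq (hq : 0 < q) (hst : (q - 1) * s * t = -1) (n : ℕ) :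
    rogersSzego q s t (n + 2)
      = (s + q ^ (n + 1) * t) * rogersSzego q s (t / q) (n + 1)
        + qInt q (n + 1) * rogersSzego q s (t / q) n := by
  have hdiv : q ^ (n + 1) * rogersSzego q s t (n + 1)
      = q ^ (n + 1) * rogersSzego q s (t / q) (n + 1)
        + (q - 1) * qInt q (n + 1) * t * rogersSzego q s t n := by
    rw [rogersSzego_succ_eq_div_add hq]
    field_simp
  linear_combination rogersSzego_succ hq s t (n + 1) + t * hdiv
    + t * rogersSzego q s t (n + 1) * qInt_mul_sub_one q (n + 1)
    - (q - 1) * qInt q (n + 1) * t * rogersSzego_succ hq s t n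
    - qInt q (n + 1) * rogersSzego q s (t / q) n * hst

lemma Bq_neg_add_eq_rogersSzego (hq : 0 < q) (hst : (q - 1) * s * t = -1) (n : ℕ) :
    Bq q (-(s + t)) n = q ^ n.choose 2 * rogersSzego q s t n := by
  induction n using Nat.twoStepInduction with
  | zero => simp [Bq, rogersSzego_zero]
  | one => simp [Bq, rogersSzego_one hq]
  | more n ih₀ ih₁ =>
    have hchoose₁ : (n + 1).choose 2 = n.choose 2 + n := by
      simp [Nat.choose_succ_succ, add_comm]
    have hchoose₂ : (n + 2).choose 2 = n.choose 2 + n + (n + 1) := by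
      rw [Nat.choose_succ_succ (n + 1), hchoose₁, Nat.choose_one_right]; ring
    rw [Bq, ih₀, ih₁, rogersSzego_three_term hq, hchoose₁, hchoose₂]
    linear_combination (norm := skip)
      (q ^ (n.choose 2 + n + (n + 1)) * qInt q (n + 1) * rogersSzego q s t n / q ^ (n + 1)) * hst
    field_simp
    ring

lemma rogersSzego_mul_div (hu : u ≠ 0) (huq : u ^ 2 = q) (s t : ℝ) (n : ℕ) :
    rogersSzego q (u * s) (t / u) n = u ^ n * rogersSzego q s (t / q) n := by
  rw [rogersSzego, rogersSzego, mul_sum]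
  refine sum_congr rfl fun b hb => ?_
  obtain ⟨c, rfl⟩ : ∃ c, n = c + b := ⟨n - b, by grind⟩
  subst huq
  rw [Nat.add_sub_cancel, div_pow, div_pow]
  field_simp
  ring

lemma ne_zero_of_sq_eq (hq : 0 < q) (huq : u ^ 2 = q) : u ≠ 0 :=
  (pow_ne_zero_iff two_ne_zero).mp (huq ▸ hq.ne')

/-- For `u = √q` this is the balanced coefficient `[j+k choose k]_q q^(-jk/2)`. -/
noncomputable def symQBinom (q u : ℝ) (j k : ℕ) : ℝ := qBinomF q (j + k) k / u ^ (j * k)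

lemma symQBinom_zero_left (hq : 0 < q) (k : ℕ) : symQBinom q u 0 k = 1 := by
  simp [symQBinom, qBinomF_self hq]

lemma symQBinom_zero_right (hq : 0 < q) (j : ℕ) : symQBinom q u j 0 = 1 := by
  simp [symQBinom, qBinomF_zero_right hq]

lemma symQBinom_one_left (hq : 0 < q) (k : ℕ) : symQBinom q u 1 k = qInt q (k + 1) / u ^ k := by
  have hF := (qFact_pos hq k).ne'
  rw [symQBinom, qBinomF_add, add_comm 1 k, qFact_succ, qFact_one, one_mul, one_mul]
  field_simp

lemma symQBinom_one_right (hq : 0 < q) (j : ℕ) : symQBinom q u j 1 = qInt q (j + 1) / u ^ j := by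
  have hF := (qFact_pos hq j).ne'
  rw [symQBinom, qBinomF_add, qFact_succ, qFact_one, mul_one, mul_one]
  field_simp

lemma symQBinom_comm (j k : ℕ) : symQBinom q u j k = symQBinom q u k j := by
  rw [symQBinom, symQBinom, qBinomF_add, qBinomF_add, add_comm k j, mul_comm k j,
    mul_comm (qFact q k)]

lemma qInt_mul_symQBinom (hq : 0 < q) (hu : u ≠ 0) (j k : ℕ) :
    qInt q (k + 1) * symQBinom q u j (k + 1) * u ^ j
      = qInt q (j + 1) * symQBinom q u (j + 1) k * u ^ k := by
  have := (qFact_pos hq j).ne'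
  have := (qFact_pos hq k).ne'
  have := (qInt_succ_pos hq j).ne'
  have := (qInt_succ_pos hq k).ne'
  rw [symQBinom, symQBinom, qBinomF_add, qBinomF_add, show j + 1 + k = j + (k + 1) by omega,
    qFact_succ q j, qFact_succ q k]
  field_simp
  ring

lemma symQBinom_succ_succ (hq : 0 < q) (huq : u ^ 2 = q) (j k : ℕ) :
    symQBinom q u (j + 1) (k + 1)
      = u ^ (j + 1) * symQBinom q u (j + 1) k + symQBinom q u j (k + 1) / u ^ (k + 1) := by
  have hu := ne_zero_of_sq_eq hq huq
  have hpascal := qBinomF_pascal hq j k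
  simp only [symQBinom]
  rw [show j + 1 + (k + 1) = j + k + 2 by omega, show j + 1 + k = j + k + 1 by omega,
    show j + (k + 1) = j + k + 1 by omega, hpascal]
  subst huq
  field_simp
  ring

lemma symQBinom_succ_succ' (hq : 0 < q) (huq : u ^ 2 = q) (j k : ℕ) :
    symQBinom q u (j + 1) (k + 1)
      = symQBinom q u (j + 1) k / u ^ (j + 1) + u ^ (k + 1) * symQBinom q u j (k + 1) := by
  rw [symQBinom_comm, symQBinom_succ_succ hq huq, symQBinom_comm k, symQBinom_comm (k + 1)]
  ring

lemma mul_Hq (q x : ℝ) (k : ℕ) :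
    x * Hq q x k = Hq q x (k + 1) + qInt q k * Hq q x (k - 1) := by
  cases k with
  | zero => simp [Hq, qInt_zero]
  | succ k => rw [Hq]; simp

lemma add_mul_sum_Hq (x a : ℝ) (c d : ℕ → ℝ) (n : ℕ)
    (h_zero : d 0 = qInt q 1 * c 1 + a * c 0)
    (h_mid : ∀ k < n, d (k + 1) = c k + qInt q (k + 2) * c (k + 2) + a * c (k + 1))
    (h_last : d (n + 1) = c n + a * c (n + 1)) (h_top : d (n + 2) = c (n + 1)) :
    (x + a) * ∑ k ∈ range (n + 2), c k * Hq q x k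
      = ∑ k ∈ range (n + 3), d k * Hq q x k := by
  have hraise : ∑ k ∈ range (n + 2), c k * Hq q x (k + 1)
      = ∑ k ∈ range n, c k * Hq q x (k + 1) + c n * Hq q x (n + 1)
        + c (n + 1) * Hq q x (n + 2) := by
    rw [sum_range_succ, sum_range_succ]
  have hlower : ∑ k ∈ range (n + 2), c k * (qInt q k * Hq q x (k - 1))
      = ∑ k ∈ range n, qInt q (k + 2) * c (k + 2) * Hq q x (k + 1)
        + qInt q 1 * c 1 * Hq q x 0 := by
    rw [sum_range_succ', sum_range_succ', qInt_zero]
    simp only [add_tsub_cancel_right, mul_comm, mul_left_comm]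
    ring
  have hkeep : ∑ k ∈ range (n + 2), c k * Hq q x k
      = ∑ k ∈ range n, c (k + 1) * Hq q x (k + 1) + c 0 * Hq q x 0
        + c (n + 1) * Hq q x (n + 1) := by
    rw [sum_range_succ, sum_range_succ']
  have hd : ∑ k ∈ range (n + 3), d k * Hq q x k
      = ∑ k ∈ range n, (c k + qInt q (k + 2) * c (k + 2) + a * c (k + 1)) * Hq q x (k + 1)
        + d 0 * Hq q x 0 + d (n + 1) * Hq q x (n + 1) + d (n + 2) * Hq q x (n + 2) := by
    rw [sum_range_succ, sum_range_succ, sum_range_succ',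
      sum_congr rfl fun k hk => by rw [h_mid k (mem_range.mp hk)]]
  have hsplit : (x + a) * ∑ k ∈ range (n + 2), c k * Hq q x k
      = ∑ k ∈ range (n + 2), c k * Hq q x (k + 1)
        + ∑ k ∈ range (n + 2), c k * (qInt q k * Hq q x (k - 1))
        + a * ∑ k ∈ range (n + 2), c k * Hq q x k := by
    rw [add_mul, mul_sum, ← sum_add_distrib]
    simp only [mul_left_comm x, mul_Hq, mul_add]
  rw [hsplit, hraise, hlower, hkeep, hd, h_zero, h_last, h_top]
  simp only [add_mul, mul_add, sum_add_distrib, mul_sum, mul_assoc]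
  ring

noncomputable def convCoeff (q u s t : ℝ) (j k : ℕ) : ℝ :=
  symQBinom q u j k * rogersSzego q s t j

/-- After `R_(r+2)(s, t)` and `R_(r+2)(s, t/q)` are eliminated, both sides are linear in
`R_(r+1)(s, t/q)` and `R_r(s, t/q)`, with coefficients matched by the two Pascal rules and the
ratio rule for `symQBinom`. -/
lemma convCoeff_interior (hq : 0 < q) (huq : u ^ 2 = q) (hst : (q - 1) * s * t = -1) (r k : ℕ) :
    convCoeff q u s t (r + 2) (k + 1)
      = convCoeff q u (u * s) (t / u) (r + 2) k
        + qInt q (k + 2) * convCoeff q u (u * s) (t / u) r (k + 2)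
        + (s / u ^ (r + k + 2) + u ^ (r + k + 2) * t)
          * convCoeff q u (u * s) (t / u) (r + 1) (k + 1) := by
  have hu := ne_zero_of_sq_eq hq huq
  have hP := symQBinom_succ_succ hq huq (r + 1) k
  have hP' := symQBinom_succ_succ' hq huq (r + 1) k
  have hR := qInt_mul_symQBinom hq hu r (k + 1)
  simp only [convCoeff]
  rw [rogersSzego_mul_div hu huq, rogersSzego_mul_div hu huq, rogersSzego_mul_div hu huq,
    rogersSzego_add_two_eq hq hst, rogersSzego_three_term hq s (t / q) r]
  set γ₁ := rogersSzego q s (t / q) (r + 1)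
  set γ₀ := rogersSzego q s (t / q) r
  linear_combination (norm := skip)
    (s * γ₁) * hP + (q ^ (r + 1) * t * γ₁ + qInt q (r + 1) * γ₀) * hP' - γ₀ * hR
      + (u ^ (r + 2) * symQBinom q u (r + 2) k * qInt q (r + 1) * γ₀ / q ^ (r + 2)) * hst
  subst huq
  field_simp
  ring

lemma convCoeff_left_edge (hq : 0 < q) (huq : u ^ 2 = q) (hst : (q - 1) * s * t = -1) (n : ℕ) :
    convCoeff q u s t (n + 2) 0
      = qInt q 1 * convCoeff q u (u * s) (t / u) n 1
        + (s / u ^ (n + 1) + u ^ (n + 1) * t) * convCoeff q u (u * s) (t / u) (n + 1) 0 := by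
  have hu := ne_zero_of_sq_eq hq huq
  simp only [convCoeff, symQBinom_zero_right hq, symQBinom_one_right hq, qInt_one]
  rw [rogersSzego_mul_div hu huq, rogersSzego_mul_div hu huq, rogersSzego_add_two_eq hq hst,
    ← huq]
  field_simp
  ring

lemma convCoeff_right_edge (hq : 0 < q) (huq : u ^ 2 = q) (n : ℕ) :
    convCoeff q u s t 1 (n + 1)
      = convCoeff q u (u * s) (t / u) 1 n
        + (s / u ^ (n + 1) + u ^ (n + 1) * t) * convCoeff q u (u * s) (t / u) 0 (n + 1) := by
  have hu := ne_zero_of_sq_eq hq huq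
  simp only [convCoeff, symQBinom_zero_left hq, symQBinom_one_left hq, rogersSzego_one hq,
    rogersSzego_zero]
  have hsucc : qInt q (n + 1 + 1) = qInt q (n + 1) + q ^ (n + 1) := sum_range_succ _ _
  have hshift := qInt_add q 1 (n + 1)
  rw [add_comm 1 (n + 1), qInt_one] at hshift
  rw [← huq] at hsucc hshift ⊢
  field_simp
  linear_combination (u ^ (n + 1) * s) * hshift + (u ^ (n + 1) * t) * hsucc

noncomputable def hermiteConv (q u x s t : ℝ) (m : ℕ) : ℝ :=
  ∑ k ∈ range (m + 1), convCoeff q u s t (m - k) k * Hq q x k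

lemma hermiteConv_succ (hq : 0 < q) (huq : u ^ 2 = q) (hst : (q - 1) * s * t = -1) (x : ℝ)
    (m : ℕ) :
    hermiteConv q u x s t (m + 1)
      = (x + (s / u ^ m + u ^ m * t)) * hermiteConv q u x (u * s) (t / u) m := by
  rcases m with _ | n
  · simp [hermiteConv, sum_range_succ, convCoeff, symQBinom_zero_left hq, symQBinom_zero_right hq,
      rogersSzego_zero, rogersSzego_one hq, Hq]
    ring
  refine (add_mul_sum_Hq x _ _ _ n ?_ ?_ ?_ ?_).symm
  · exact convCoeff_left_edge hq huq hst n
  · intro k hk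
    obtain ⟨r, rfl⟩ : ∃ r, n = k + r + 1 := ⟨n - k - 1, by omega⟩
    rw [show k + r + 1 + 2 - (k + 1) = r + 2 by omega, show k + r + 1 + 1 - k = r + 2 by omega,
      show k + r + 1 + 1 - (k + 2) = r by omega, show k + r + 1 + 1 - (k + 1) = r + 1 by omega,
      show k + r + 1 + 1 = r + k + 2 by omega]
    exact convCoeff_interior hq huq hst r k
  · rw [show n + 2 - (n + 1) = 1 by omega, show n + 1 - n = 1 by omega, Nat.sub_self]
    exact convCoeff_right_edge hq huq n
  · simp [convCoeff, symQBinom_zero_left hq, rogersSzego_zero]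

noncomputable def linFactor (u x s t : ℝ) (e : ℤ) : ℝ := x + u ^ e * s + u ^ (-e) * t

noncomputable def shiftedProd (u x s t : ℝ) (m : ℕ) : ℝ :=
  ∏ j ∈ range m, linFactor u x s t ((m : ℤ) - 1 - 2 * j)

lemma shiftedProd_succ (hu : u ≠ 0) (x s t : ℝ) (m : ℕ) :
    shiftedProd u x s t (m + 1)
      = (x + (s / u ^ m + u ^ m * t)) * shiftedProd u x (u * s) (t / u) m := by
  rw [shiftedProd, prod_range_succ, mul_comm, shiftedProd]
  congr 1
  · rw [linFactor, show ((m + 1 : ℕ) : ℤ) - 1 - 2 * m = -m by push_cast; ring, neg_neg,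
      zpow_neg, zpow_natCast]
    ring
  · refine prod_congr rfl fun j _ => ?_
    rw [linFactor, linFactor,
      show ((m + 1 : ℕ) : ℤ) - 1 - 2 * j = (m - 1 - 2 * j) + 1 by push_cast; ring,
      zpow_add_one₀ hu, neg_add, zpow_add₀ hu, zpow_neg_one]
    ring

lemma shiftedProd_add_two (x s t : ℝ) (m : ℕ) :
    shiftedProd u x s t (m + 2)
      = linFactor u x s t (m + 1) * linFactor u x s t (-(m + 1)) * shiftedProd u x s t m := by
  rw [shiftedProd, prod_range_succ', prod_range_succ, shiftedProd]
  push_cast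
  rw [show (m : ℤ) + 2 - 1 - 0 = m + 1 by ring,
    show (m : ℤ) + 2 - 1 - 2 * (m + 1) = -(m + 1) by ring]
  have hshift : ∀ j ∈ range m, linFactor u x s t ((m : ℤ) + 2 - 1 - 2 * (j + 1))
      = linFactor u x s t (m - 1 - 2 * j) := fun j _ => by ring_nf
  rw [prod_congr rfl hshift]
  ring

lemma sq_rpow_natCast_div_two (hu : 0 ≤ u) (N : ℕ) : (u ^ 2) ^ ((N : ℝ) / 2) = u ^ N := by
  rw [Real.rpow_div_two_eq_sqrt _ (by positivity), Real.sqrt_sq hu, Real.rpow_natCast]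

lemma sq_rpow_neg_natCast_div_two (hu : 0 ≤ u) (N : ℕ) :
    (u ^ 2) ^ (-(N : ℝ) / 2) = (u ^ N)⁻¹ := by
  rw [Real.rpow_div_two_eq_sqrt _ (by positivity), Real.sqrt_sq hu, Real.rpow_neg hu,
    Real.rpow_natCast]

lemma linFactor_mul_linFactor_neg (hu : 0 < u) (huq : u ^ 2 = q) (hst : (q - 1) * s * t = -1)
    (x : ℝ) (n : ℕ) :
    linFactor u x s t (n + 1) * linFactor u x s t (-(n + 1)) = vfun q x (s + t) (n + 1) := by
  have hq1 : q - 1 ≠ 0 := by rintro h; simp [h] at hst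
  subst huq
  rw [vfun, if_neg n.succ_ne_zero, sq_rpow_natCast_div_two hu.le,
    sq_rpow_neg_natCast_div_two hu.le, Real.rpow_natCast, Real.rpow_neg (by positivity),
    Real.rpow_natCast, linFactor, linFactor, neg_neg,
    show ((n : ℤ) + 1) = ((n + 1 : ℕ) : ℤ) by push_cast; ring, zpow_neg, zpow_natCast]
  linear_combination (norm := skip)
    (((u ^ 2) ^ (n + 1) + ((u ^ 2) ^ (n + 1))⁻¹ - 2) / (u ^ 2 - 1)) * hst
  field_simp
  ring

lemma hermiteConv_eq_shiftedProd (hq : 0 < q) (huq : u ^ 2 = q) (x : ℝ) (m : ℕ) :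
    ∀ {s t : ℝ}, (q - 1) * s * t = -1 → hermiteConv q u x s t m = shiftedProd u x s t m := by
  have hu := ne_zero_of_sq_eq hq huq
  induction m with
  | zero =>
    intro s t _
    simp [hermiteConv, shiftedProd, convCoeff, symQBinom_zero_left hq, rogersSzego_zero, Hq]
  | succ m ih =>
    intro s t hst
    have hst' : (q - 1) * (u * s) * (t / u) = -1 := by rw [← hst]; field_simp
    rw [hermiteConv_succ hq huq hst, shiftedProd_succ hu, ih hst']

lemma shiftedProd_two_mul (hu : 0 < u) (huq : u ^ 2 = q) (hst : (q - 1) * s * t = -1)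
    (x : ℝ) (i : ℕ) :
    shiftedProd u x s t (2 * i) = ∏ j ∈ Icc 1 i, vfun q x (s + t) (2 * j - 1) := by
  induction i with
  | zero => simp [shiftedProd]
  | succ i ih =>
    rw [mul_add_one, shiftedProd_add_two, ih, prod_Icc_succ_top (by omega), mul_comm,
      show 2 * (i + 1) - 1 = 2 * i + 1 by omega]
    have hpair := linFactor_mul_linFactor_neg hu huq hst x (2 * i)
    push_cast at hpair ⊢
    rw [hpair]

lemma shiftedProd_two_mul_add_one (hu : 0 < u) (huq : u ^ 2 = q) (hst : (q - 1) * s * t = -1)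
    (x : ℝ) (i : ℕ) :
    shiftedProd u x s t (2 * i + 1) = ∏ j ∈ range (i + 1), vfun q x (s + t) (2 * j) := by
  induction i with
  | zero => simp [shiftedProd, linFactor, vfun, add_assoc]
  | succ i ih =>
    rw [show 2 * (i + 1) + 1 = 2 * i + 1 + 2 by omega, shiftedProd_add_two, ih,
      prod_range_succ _ (i + 1), mul_comm, show 2 * (i + 1) = 2 * i + 1 + 1 by omega]
    have hpair := linFactor_mul_linFactor_neg hu huq hst x (2 * i + 1)
    push_cast at hpair ⊢
    rw [hpair]

lemma exists_add_eq_and_mul_eq_neg (y c : ℝ) (hc : 0 ≤ c) :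
    ∃ s t : ℝ, s + t = y ∧ s * t = -c := by
  have hD := Real.sq_sqrt (show 0 ≤ y ^ 2 + 4 * c by positivity)
  refine ⟨(y + √(y ^ 2 + 4 * c)) / 2, (y - √(y ^ 2 + 4 * c)) / 2, by ring, ?_⟩
  linear_combination (-1 / 4 : ℝ) * hD

lemma add_sub_one_mul_eq_two_mul_choose_two_add (j k : ℕ) :
    (j + k - 1) * j = 2 * j.choose 2 + j * k := by
  rcases j with _ | j
  · simp
  · rw [Nat.choose_two_right, Nat.mul_div_cancel' (Nat.even_mul_pred_self _).two_dvd,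
      Nat.add_sub_cancel, show j + 1 + k - 1 = j + k by omega]
    ring

lemma sum_qBinomF_Bq_Hq_eq_hermiteConv (hu : 0 < u) (huq : u ^ 2 = q)
    (hst : (q - 1) * s * t = -1) (x : ℝ) (m : ℕ) :
    ∑ k ∈ range (m + 1),
        qBinomF q m k * q ^ (-(((m - 1) * (m - k) : ℕ) : ℝ) / 2) * Bq q (-(s + t)) (m - k)
          * Hq q x k
      = hermiteConv q u x s t m := by
  subst huq
  refine sum_congr rfl fun k hk => ?_
  obtain ⟨j, rfl⟩ : ∃ j, m = j + k := ⟨m - k, by grind⟩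
  rw [Nat.add_sub_cancel, sq_rpow_neg_natCast_div_two hu.le,
    add_sub_one_mul_eq_two_mul_choose_two_add, Bq_neg_add_eq_rogersSzego (by positivity) hst,
    convCoeff, symQBinom, pow_add, pow_mul]
  field_simp

end

theorem stmt5_general (m : ℕ) (q : ℝ) (hq1 : 1 < q) (x y : ℝ) :
    (∀ i : ℕ, m = 2 * i →
      ∑ k ∈ Finset.range (m + 1),
          qBinomF q m k * q ^ (-(((m - 1) * (m - k) : ℕ) : ℝ) / 2) * Bq q y (m - k) * Hq q x k
        = ∏ j ∈ Finset.Icc 1 i, vfun q x (-y) (2 * j - 1)) ∧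
    (∀ i : ℕ, m = 2 * i + 1 →
      ∑ k ∈ Finset.range (m + 1),
          qBinomF q m k * q ^ (-(((m - 1) * (m - k) : ℕ) : ℝ) / 2) * Bq q y (m - k) * Hq q x k
        = ∏ j ∈ Finset.range (i + 1), vfun q x (-y) (2 * j)) := by
  have hq : 0 < q := by linarith
  obtain ⟨s, t, hsum, hprod⟩ :=
    exists_add_eq_and_mul_eq_neg (-y) (q - 1)⁻¹ (inv_nonneg.mpr (by linarith))
  have hst : (q - 1) * s * t = -1 := by
    rw [mul_assoc, hprod]
    field_simp [show q - 1 ≠ 0 by linarith]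
  have hu : 0 < √q := Real.sqrt_pos.mpr hq
  have huq : √q ^ 2 = q := Real.sq_sqrt hq.le
  have hy : y = -(s + t) := by rw [hsum, neg_neg]
  rw [hy, sum_qBinomF_Bq_Hq_eq_hermiteConv hu huq hst, hermiteConv_eq_shiftedProd hq huq x m hst,
    neg_neg]
  exact ⟨fun i hi => hi ▸ shiftedProd_two_mul hu huq hst x i,
    fun i hi => hi ▸ shiftedProd_two_mul_add_one hu huq hst x i⟩

theorem stmt5 (m : ℕ) (hm : 1 ≤ m) (q : ℝ) (hq1 : 1 < q) (x y : ℝ) :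
    (∀ i : ℕ, m = 2 * i →
      ∑ k ∈ Finset.range (m + 1),
          qBinomF q m k * q ^ (-(((m - 1) * (m - k) : ℕ) : ℝ) / 2) * Bq q y (m - k) * Hq q x k
        = ∏ j ∈ Finset.Icc 1 i, vfun q x (-y) (2 * j - 1)) ∧
    (∀ i : ℕ, m = 2 * i + 1 →
      ∑ k ∈ Finset.range (m + 1),
          qBinomF q m k * q ^ (-(((m - 1) * (m - k) : ℕ) : ℝ) / 2) * Bq q y (m - k) * Hq q x k
        = ∏ j ∈ Finset.range (i + 1), vfun q x (-y) (2 * j)) :=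
  stmt5_general m q hq1 x y
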